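/- Let A be a finite algebra with an atom δ of Con(A) of strongly abelian (unary) type, and let U be a (⊥, δ)-minimal set. Suppose D₁, …, D_k are δ-classes and f is a k-ary polynomial of A mapping D₁ × ⋯ × D_k into U. Then f, restricted to D₁ × ⋯ × D_k, depends on at most one of its variables. -/

import Mathlib

/-- A purely functional first-order signature. -/
structure Signature where
  ops : Type
  arity : ops → ℕ

/-- An algebra for a signature: an interpretation of each operation symbol. -/
structure UAlg (σ : Signature) (A : Type) where
  interp : ∀ o : σ.ops, (Fin (σ.arity o) → A) → A

/-- Terms in `n` variables over a signature. -/
inductive Term (σ : Signature) (n : ℕ) : Type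
  | var : Fin n → Term σ n
  | op : (o : σ.ops) → (Fin (σ.arity o) → Term σ n) → Term σ n

/-- Evaluation of a term at a tuple. -/
def Term.eval {σ : Signature} {A : Type} (Alg : UAlg σ A) {n : ℕ} :
    Term σ n → (Fin n → A) → A
  | .var i, v => v i
  | .op o ts, v => Alg.interp o fun j => (ts j).eval Alg v

/-- A congruence: an equivalence relation compatible with all operations. -/
def IsCongruence {σ : Signature} {A : Type} (Alg : UAlg σ A) (r : A → A → Prop) : Prop :=
  Equivalence r ∧ ∀ (o : σ.ops) (x y : Fin (σ.arity o) → A),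
    (∀ i, r (x i) (y i)) → r (Alg.interp o x) (Alg.interp o y)

/-- A `k`-ary polynomial operation: a term operation with parameters. -/
def IsPolynomial {σ : Signature} {A : Type} (Alg : UAlg σ A) {k : ℕ}
    (f : (Fin k → A) → A) : Prop :=
  ∃ (n : ℕ) (t : Term σ (k + n)) (params : Fin n → A),
    ∀ x : Fin k → A, f x = t.eval Alg (Fin.append x params)

/-- A unary polynomial operation. -/
def IsUnaryPolynomial {σ : Signature} {A : Type} (Alg : UAlg σ A) (f : A → A) : Prop :=
  IsPolynomial Alg (k := 1) fun x => f (x 0)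

/-- The term condition TermCond(α, β; γ). -/
def TermCond {σ : Signature} {A : Type} (Alg : UAlg σ A) (α β γ : A → A → Prop) : Prop :=
  ∀ (n m : ℕ) (t : Term σ (n + m)) (a₁ a₂ : Fin n → A) (b₁ b₂ : Fin m → A),
    (∀ i, α (a₁ i) (a₂ i)) → (∀ i, β (b₁ i) (b₂ i)) →
    γ (t.eval Alg (Fin.append a₁ b₁)) (t.eval Alg (Fin.append a₁ b₂)) →
    γ (t.eval Alg (Fin.append a₂ b₁)) (t.eval Alg (Fin.append a₂ b₂))

/-- β is strongly abelian over γ. -/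
def StronglyAbelianOver {σ : Signature} {A : Type} (Alg : UAlg σ A)
    (β γ : A → A → Prop) : Prop :=
  ∀ (n m : ℕ) (t : Term σ (n + m)) (a₁ a₂ : Fin n → A) (b₁ b₂ b₃ : Fin m → A),
    (∀ i, β (a₁ i) (a₂ i)) → (∀ i, β (b₁ i) (b₂ i)) → (∀ i, β (b₂ i) (b₃ i)) →
    γ (t.eval Alg (Fin.append a₁ b₁)) (t.eval Alg (Fin.append a₂ b₂)) →
    γ (t.eval Alg (Fin.append a₁ b₃)) (t.eval Alg (Fin.append a₂ b₃))

/-- The least congruence containing a binary relation. -/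
def congClosure {σ : Signature} {A : Type} (Alg : UAlg σ A) (R : A → A → Prop) :
    A → A → Prop :=
  fun a b => ∀ r, IsCongruence Alg r → (∀ x y, R x y → r x y) → r a b

/-- A subset closed under the operations. -/
def IsSubalgebra {σ : Signature} {A : Type} (Alg : UAlg σ A) (s : Set A) : Prop :=
  ∀ (o : σ.ops) (x : Fin (σ.arity o) → A), (∀ j, x j ∈ s) → Alg.interp o x ∈ s

/-- The power algebra `A^I`. -/
def UAlg.pow {σ : Signature} {A : Type} (Alg : UAlg σ A) (I : Type) :
    UAlg σ (I → A) :=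
  ⟨fun o x i => Alg.interp o fun j => x j i⟩

/-- The product of a family of algebras. -/
def UAlg.pi {σ : Signature} {ι : Type} {A : ι → Type} (Alg : ∀ i, UAlg σ (A i)) :
    UAlg σ (∀ i, A i) :=
  ⟨fun o x i => (Alg i).interp o fun j => x j i⟩

/-- The binary product of two algebras. -/
def UAlg.prod2 {σ : Signature} {A B : Type} (AlgA : UAlg σ A) (AlgB : UAlg σ B) :
    UAlg σ (A × B) :=
  ⟨fun o x => (AlgA.interp o fun j => (x j).1, AlgB.interp o fun j => (x j).2)⟩

/-- The algebra structure on a subalgebra. -/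
def UAlg.sub {σ : Signature} {A : Type} (Alg : UAlg σ A) (s : Set A)
    (hs : IsSubalgebra Alg s) : UAlg σ s :=
  ⟨fun o x => ⟨Alg.interp o fun j => (x j : A), hs o _ fun j => (x j).2⟩⟩

/-- Homomorphisms of algebras. -/
def IsHom {σ : Signature} {A B : Type} (AlgA : UAlg σ A) (AlgB : UAlg σ B)
    (f : A → B) : Prop :=
  ∀ (o : σ.ops) (x : Fin (σ.arity o) → A), f (AlgA.interp o x) = AlgB.interp o (f ∘ x)

/-- An idempotent unary polynomial. -/
def IsIdempotentPoly {σ : Signature} {A : Type} (Alg : UAlg σ A) (e : A → A) : Prop :=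
  IsUnaryPolynomial Alg e ∧ ∀ x, e (e x) = e x

/-- A (⊥, δ)-minimal set. -/
def IsMinimalSet {σ : Signature} {A : Type} (Alg : UAlg σ A) (δ : A → A → Prop)
    (U : Set A) : Prop :=
  (∃ e, IsIdempotentPoly Alg e ∧ U = Set.range e ∧ ∃ a b, δ a b ∧ e a ≠ e b) ∧
  ∀ e', IsIdempotentPoly Alg e' → Set.range e' ⊆ U → (∃ a b, δ a b ∧ e' a ≠ e' b) →
    Set.range e' = U

/-- μ is an atom of the congruence lattice. -/
def IsAtomCong {σ : Signature} {A : Type} (Alg : UAlg σ A) (μ : A → A → Prop) : Prop :=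
  IsCongruence Alg μ ∧ μ ≠ (fun a b => a = b) ∧
  ∀ θ, IsCongruence Alg θ → (∀ a b, θ a b → μ a b) → θ = (fun a b => a = b) ∨ θ = μ

/-- A (⊥, μ)-trace in a minimal set U. -/
def IsTrace {A : Type} (μ : A → A → Prop) (U N : Set A) : Prop :=
  (∃ a ∈ U, N = {x ∈ U | μ x a}) ∧ ∃ x ∈ N, ∃ y ∈ N, x ≠ y

/-- The body of a minimal set: the union of its traces. -/
def Body {A : Type} (μ : A → A → Prop) (U : Set A) : Set A :=
  {x | ∃ N, IsTrace μ U N ∧ x ∈ N}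

/-- Polynomial permutations of U (as functions A → A which are bijective on U). -/
def PolPermFun {σ : Signature} {A : Type} (Alg : UAlg σ A) (U : Set A) : Set (A → A) :=
  { p | IsUnaryPolynomial Alg p ∧ Set.BijOn p U U }

/-- Subdirect irreducibility: there is a pair contained in every nontrivial congruence. -/
def IsSI {σ : Signature} {B : Type} (Alg : UAlg σ B) : Prop :=
  ∃ a b : B, a ≠ b ∧ ∀ θ, IsCongruence Alg θ → θ ≠ (fun x y => x = y) → θ a b

/-- The subalgebra generated by a set. -/
def genSub {σ : Signature} {B : Type} (Alg : UAlg σ B) (s : Set B) : Set B :=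
  ⋂₀ {t | IsSubalgebra Alg t ∧ s ⊆ t}

/-- A strongly solvable congruence: connected to ⊥ by strongly abelian covers. -/
def IsStronglySolvable {σ : Signature} {A : Type} (Alg : UAlg σ A)
    (s : A → A → Prop) : Prop :=
  ∃ (n : ℕ) (c : Fin (n + 1) → (A → A → Prop)),
    c 0 = (fun a b => a = b) ∧ c (Fin.last n) = s ∧
    (∀ i, IsCongruence Alg (c i)) ∧
    ∀ i : Fin n, (∀ a b, c i.castSucc a b → c i.succ a b) ∧
      StronglyAbelianOver Alg (c i.succ) (c i.castSucc)

/-- The set of n-ary term operations of an algebra. -/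
def TermFun {σ : Signature} {A : Type} (Alg : UAlg σ A) (n : ℕ) :
    Set ((Fin n → A) → A) :=
  { g | ∃ t : Term σ n, g = fun v => t.eval Alg v }

/-!
Strong abelianness transports an equality `f (u[i ↦ a]) = f (v[i ↦ b])` to
`f (w[i ↦ a]) = f (w[i ↦ b])` for every `w` in the box `D₁ × ⋯ × D_k`, so each variable either
is inessential on the box or separates the two values everywhere. Let `j` be essential and
`i ≠ j`. Freezing all variables but the `j`-th gives a unary polynomial mapping `D_j` into `U`
non-constantly; by minimality of `U` (a separating polynomial from Mal'cev's description of
principal congruences turns it into a polynomial permutation of `U`) it maps `D_j` onto the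
whole trace of `U` it meets. So a change of the `i`-th variable from `a` to `b` can be undone by
a change of the `j`-th one, and strong abelianness makes `i` inessential. A function inessential
in every variable but `x_j` depends on `x_j` only, by changing one coordinate at a time.
-/

open Function Set

section Polynomials

variable {σ : Signature} {A : Type} (Alg : UAlg σ A)

def Term.rename {n m : ℕ} (ρ : Fin n → Fin m) : Term σ n → Term σ m
  | .var i => .var (ρ i)
  | .op o ts => .op o fun j => (ts j).rename ρ

theorem Term.eval_rename {n m : ℕ} (ρ : Fin n → Fin m) (t : Term σ n) (v : Fin m → A) :
    (t.rename ρ).eval Alg v = t.eval Alg (v ∘ ρ) := by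
  induction t with
  | var i => rfl
  | op o ts ih => simp only [Term.rename, Term.eval, ih]

inductive PolyClone (k : ℕ) : ((Fin k → A) → A) → Prop
  | proj (i : Fin k) : PolyClone k fun x => x i
  | const (a : A) : PolyClone k fun _ => a
  | op (o : σ.ops) {g : Fin (σ.arity o) → (Fin k → A) → A} :
      (∀ j, PolyClone k (g j)) → PolyClone k fun x => Alg.interp o fun j => g j x

variable {Alg}

theorem PolyClone.comp {k m : ℕ} {f : (Fin k → A) → A} {g : Fin k → (Fin m → A) → A}
    (hf : PolyClone Alg k f) (hg : ∀ l, PolyClone Alg m (g l)) :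
    PolyClone Alg m fun x => f fun l => g l x := by
  induction hf with
  | proj i => exact hg i
  | const a => exact .const a
  | op o _ ih => exact .op o ih

theorem PolyClone.isPolynomial {k : ℕ} {f : (Fin k → A) → A} (hf : PolyClone Alg k f) :
    IsPolynomial Alg f := by
  induction hf with
  | proj i => exact ⟨0, .var (Fin.castAdd 0 i), Fin.elim0, fun x => by simp [Term.eval]⟩
  | const a => exact ⟨1, .var (Fin.natAdd k 0), fun _ => a, fun x => by simp [Term.eval]⟩
  | op o _ ih =>
    choose n t p ht using ih
    -- the parameters of all the arguments, laid side by side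
    let params : Fin (∑ j, n j) → A :=
      (fun s : Σ j, Fin (n j) => p s.1 s.2) ∘ finSigmaFinEquiv.symm
    let ρ (j : Fin (σ.arity o)) : Fin (k + n j) → Fin (k + ∑ j, n j) :=
      Fin.append (Fin.castAdd _) fun l => Fin.natAdd k (finSigmaFinEquiv ⟨j, l⟩)
    refine ⟨_, .op o fun j => (t j).rename (ρ j), params, fun x => ?_⟩
    simp only [Term.eval, Term.eval_rename, ht]
    congr; funext j; congr; funext l
    refine Fin.addCases (fun l => by simp [ρ]) (fun l => ?_) l
    simp only [ρ, params, Fin.append_right, comp_apply]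
    rw [Equiv.symm_apply_apply]

theorem IsPolynomial.polyClone {k : ℕ} {f : (Fin k → A) → A} (hf : IsPolynomial Alg f) :
    PolyClone Alg k f := by
  obtain ⟨n, t, p, ht⟩ := hf
  rw [funext ht]
  clear ht
  induction t with
  | var i =>
    refine Fin.addCases (fun i => ?_) (fun i => ?_) i
    · simpa [Term.eval] using PolyClone.proj i
    · simpa [Term.eval] using PolyClone.const (p i)
  | op o _ ih => exact .op o ih

end Polynomials

theorem rel_of_forall_update {ι α β : Type*} [Fintype ι] [DecidableEq ι]
    {R : β → β → Prop} (hrefl : ∀ b, R b b)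
    (htrans : ∀ {a b c}, R a b → R b c → R a c) {S : ι → Set α}
    {F : (ι → α) → β} {x y : ι → α} (hx : ∀ i, x i ∈ S i) (hy : ∀ i, y i ∈ S i)
    (h : ∀ i w, (∀ j, w j ∈ S j) → R (F (update w i (x i))) (F (update w i (y i)))) :
    R (F x) (F y) := by
  suffices ∀ s : Finset ι, R (F x) (F (s.piecewise y x)) by simpa using this .univ
  intro s
  induction s using Finset.induction_on with
  | empty => simpa using hrefl _
  | insert i s hi ih =>
    have hmem : ∀ j, s.piecewise y x j ∈ S j := fun j => by
      by_cases hj : j ∈ s <;> simp [hj, hx, hy]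
    have hstep := h i _ hmem
    rw [update_eq_self_iff.2 (Finset.piecewise_eq_of_notMem _ _ _ hi).symm] at hstep
    rw [Finset.piecewise_insert]
    exact htrans ih hstep

theorem rel_update_update {ι α : Type*} [DecidableEq ι] {R : α → α → Prop} {x y : ι → α}
    (hxy : ∀ i, R (x i) (y i)) (j : ι) {a b : α} (hab : R a b) (i : ι) :
    R (update x j a i) (update y j b i) := by
  rcases eq_or_ne i j with rfl | h
  · simpa
  · simpa [update_of_ne h] using hxy i

section PolynomialOperations

variable {σ : Signature} {A : Type} {Alg : UAlg σ A}

theorem IsPolynomial.proj {k : ℕ} (i : Fin k) : IsPolynomial Alg fun x => x i :=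
  (PolyClone.proj i).isPolynomial

theorem IsPolynomial.const {k : ℕ} (a : A) : IsPolynomial Alg (k := k) fun _ => a :=
  (PolyClone.const a).isPolynomial

theorem IsPolynomial.interp (o : σ.ops) : IsPolynomial Alg (Alg.interp o) :=
  (PolyClone.op o PolyClone.proj).isPolynomial

theorem IsPolynomial.comp {k m : ℕ} {f : (Fin k → A) → A} {g : Fin k → (Fin m → A) → A}
    (hf : IsPolynomial Alg f) (hg : ∀ l, IsPolynomial Alg (g l)) :
    IsPolynomial Alg fun x => f fun l => g l x :=
  (hf.polyClone.comp fun l => (hg l).polyClone).isPolynomial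

theorem IsPolynomial.update {k : ℕ} {f : (Fin k → A) → A} (hf : IsPolynomial Alg f)
    (w : Fin k → A) (j : Fin k) : IsUnaryPolynomial Alg fun z => f (update w j z) := by
  refine hf.comp fun l => ?_
  by_cases hl : l = j
  · subst hl; simpa using IsPolynomial.proj 0
  · simpa [update_of_ne hl] using IsPolynomial.const (w l)

theorem IsUnaryPolynomial.id : IsUnaryPolynomial Alg fun x => x :=
  IsPolynomial.proj 0

theorem IsUnaryPolynomial.comp {p q : A → A} (hp : IsUnaryPolynomial Alg p)
    (hq : IsUnaryPolynomial Alg q) : IsUnaryPolynomial Alg fun x => p (q x) :=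
  IsPolynomial.comp hp fun _ => hq

theorem IsUnaryPolynomial.iterate {p : A → A} (hp : IsUnaryPolynomial Alg p) (n : ℕ) :
    IsUnaryPolynomial Alg p^[n] := by
  induction n with
  | zero => exact IsUnaryPolynomial.id
  | succ n ih => rw [iterate_succ']; exact hp.comp ih

theorem IsCongruence.apply_polynomial {δ : A → A → Prop} (hδ : IsCongruence Alg δ) {k : ℕ}
    {f : (Fin k → A) → A} (hf : IsPolynomial Alg f) {x y : Fin k → A}
    (hxy : ∀ i, δ (x i) (y i)) : δ (f x) (f y) := by
  have hc := hf.polyClone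
  clear hf
  induction hc with
  | proj i => exact hxy i
  | const a => exact hδ.1.refl a
  | op o _ ih => exact hδ.2 o _ _ ih

theorem IsCongruence.apply_unary {δ : A → A → Prop} (hδ : IsCongruence Alg δ) {p : A → A}
    (hp : IsUnaryPolynomial Alg p) {a b : A} (hab : δ a b) : δ (p a) (p b) :=
  hδ.apply_polynomial hp (x := fun _ => a) (y := fun _ => b) fun _ => hab

theorem isCongruence_of_unary {r : A → A → Prop} (hr : Equivalence r)
    (hunary : ∀ p, IsUnaryPolynomial Alg p → ∀ a b, r a b → r (p a) (p b)) :
    IsCongruence Alg r := by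
  classical
  refine ⟨hr, fun o x y hxy => ?_⟩
  refine rel_of_forall_update (S := fun _ => univ) hr.refl hr.trans
    (fun _ => trivial) (fun _ => trivial) fun i w _ => ?_
  exact hunary _ ((IsPolynomial.interp o).update w i) _ _ (hxy i)

end PolynomialOperations

theorem Set.BijOn.exists_pos_iterate_eqOn {α : Type*} {f : α → α} {s : Set α} (hs : s.Finite)
    (h : BijOn f s s) : ∃ n, 0 < n ∧ ∀ x ∈ s, f^[n] x = x := by
  have := hs.to_subtype
  let π : Equiv.Perm s := Equiv.ofBijective _ h.bijective
  refine ⟨orderOf π, orderOf_pos π, fun x hx => ?_⟩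
  calc f^[orderOf π] x = (h.mapsTo.restrict f s s)^[orderOf π] ⟨x, hx⟩ :=
        (h.mapsTo.coe_iterate_restrict ⟨x, hx⟩ _).symm
    _ = ((π ^ orderOf π) ⟨x, hx⟩ : α) := by rw [Equiv.Perm.coe_pow]; rfl
    _ = x := by rw [pow_orderOf_eq_one]; rfl

section MinimalSets

variable {σ : Signature} {A : Type} {Alg : UAlg σ A} {δ : A → A → Prop}

/-- The generators of the principal congruence `Cg(u₁, u₂)`, by Mal'cev's description. -/
def polyPairRel (Alg : UAlg σ A) (u₁ u₂ : A) (x y : A) : Prop :=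
  ∃ s, IsUnaryPolynomial Alg s ∧ s u₁ = x ∧ s u₂ = y

theorem isCongruence_eqvGen_polyPairRel (u₁ u₂ : A) :
    IsCongruence Alg (Relation.EqvGen (polyPairRel Alg u₁ u₂)) := by
  refine isCongruence_of_unary (Relation.EqvGen.is_equivalence _) fun p hp a b hab => ?_
  induction hab with
  | rel a b hab =>
    obtain ⟨s, hs, rfl, rfl⟩ := hab
    exact .rel _ _ ⟨_, hp.comp hs, rfl, rfl⟩
  | refl a => exact .refl _
  | symm a b _ ih => exact .symm _ _ ih
  | trans a b c _ _ ih₁ ih₂ => exact .trans _ _ _ ih₁ ih₂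

theorem IsAtomCong.exists_separating (hatom : IsAtomCong Alg δ) {u₁ u₂ : A} (hu : δ u₁ u₂)
    (hne : u₁ ≠ u₂) {c d : A} (hcd : δ c d) {p : A → A} (hp : p c ≠ p d) :
    ∃ s, IsUnaryPolynomial Alg s ∧ δ (s u₁) c ∧ p (s u₁) ≠ p (s u₂) := by
  have hδ := hatom.1.1
  by_contra! hsep
  set θ := Relation.EqvGen (polyPairRel Alg u₁ u₂)
  have hθδ : ∀ x y, θ x y → δ x y := fun x y h =>
    hδ.eqvGen_iff.1 <| Relation.EqvGen.mono (fun _ _ ⟨s, hs, hx, hy⟩ =>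
      hx ▸ hy ▸ hatom.1.apply_unary hs hu) x y h
  have hθu : θ u₁ u₂ := .rel _ _ ⟨_, IsUnaryPolynomial.id, rfl, rfl⟩
  have hθ_eq : θ = δ := (hatom.2.2 θ (isCongruence_eqvGen_polyPairRel u₁ u₂) hθδ).resolve_left
    fun h => hne (h ▸ hθu :)
  -- if no `s` separates, `θ` is contained in the kernel of `p` on the class of `c`
  let κ x y := δ x y ∧ (δ x c → p x = p y)
  have hκ : Equivalence κ :=
    { refl := fun x => ⟨hδ.refl x, fun _ => rfl⟩
      symm := fun ⟨h, hp⟩ => ⟨hδ.symm h, fun hy => (hp (hδ.trans h hy)).symm⟩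
      trans := fun ⟨h₁, hp₁⟩ ⟨h₂, hp₂⟩ =>
        ⟨hδ.trans h₁ h₂, fun hx => (hp₁ hx).trans (hp₂ (hδ.trans (hδ.symm h₁) hx))⟩ }
  have hθκ : κ c d := hκ.eqvGen_iff.1 <| Relation.EqvGen.mono (fun _ _ ⟨s, hs, hx, hy⟩ =>
      hx ▸ hy ▸ ⟨hatom.1.apply_unary hs hu, hsep s hs⟩) c d (hθ_eq ▸ hcd)
  exact hp (hθκ.2 (hδ.refl c))

variable [Finite A] {U : Set A}

theorem IsMinimalSet.range_eq (hU : IsMinimalSet Alg δ U) (hatom : IsAtomCong Alg δ)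
    {p : A → A} (hp : IsUnaryPolynomial Alg p) (hpU : range p ⊆ U)
    (hnc : ∃ a b, δ a b ∧ p a ≠ p b) : range p = U := by
  obtain ⟨g, ⟨hg, hgU, x, y, hxy, hgxy⟩, hmin⟩ := Set.exists_min_image
    {q | IsUnaryPolynomial Alg q ∧ range q ⊆ U ∧ ∃ a b, δ a b ∧ q a ≠ q b}
    (fun q => (range q).ncard) (toFinite _) ⟨p, hp, hpU, hnc⟩
  suffices hg_range : range g = U from
    eq_of_subset_of_ncard_le hpU (hg_range ▸ hmin p ⟨hp, hpU, hnc⟩) (toFinite _)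
  -- `g` has a range of least size, so `w = g ∘ s` permutes it and an iterate of `w` is an
  -- idempotent with that range
  obtain ⟨s, hs, -, hsep⟩ :=
    hatom.exists_separating (hatom.1.apply_unary hg hxy) hgxy hxy hgxy
  let w z := g (s z)
  have hwg_range : range (fun z => w (g z)) = range g :=
    eq_of_subset_of_ncard_le (range_subset_iff.2 fun z => mem_range_self _)
      (hmin _ ⟨(hg.comp hs).comp hg, (range_subset_iff.2 fun z => hgU (mem_range_self _)),
        x, y, hxy, hsep⟩) (toFinite _)
  have hw_bij : BijOn w (range g) (range g) := by
    refine ((toFinite _).surjOn_iff_bijOn_of_mapsTo fun _ _ => mem_range_self _).1 ?_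
    intro v hv
    obtain ⟨z, rfl⟩ := hwg_range ▸ hv
    exact ⟨g z, mem_range_self z, rfl⟩
  obtain ⟨n, hn, hfix⟩ := hw_bij.exists_pos_iterate_eqOn (toFinite _)
  have hE_range : range w^[n] ⊆ range g := by
    obtain ⟨m, rfl⟩ := Nat.exists_eq_succ_of_ne_zero hn.ne'
    exact range_subset_iff.2 fun z => by rw [iterate_succ_apply']; exact mem_range_self _
  have hE : IsIdempotentPoly Alg w^[n] :=
    ⟨(hg.comp hs).iterate n, fun z => hfix _ (hE_range (mem_range_self z))⟩
  have hE_eq := hU.2 _ hE (hE_range.trans hgU) ⟨g x, g y, hatom.1.apply_unary hg hxy,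
    by rwa [hfix _ (mem_range_self x), hfix _ (mem_range_self y)]⟩
  exact hgU.antisymm (hE_eq ▸ hE_range)

theorem IsMinimalSet.mem_polPermFun (hU : IsMinimalSet Alg δ U) (hatom : IsAtomCong Alg δ)
    {p : A → A} (hp : IsUnaryPolynomial Alg p) (hpU : MapsTo p U U) {a b : A} (ha : a ∈ U)
    (hb : b ∈ U) (hab : δ a b) (hne : p a ≠ p b) : p ∈ PolPermFun Alg U := by
  obtain ⟨e, he, hUe, -⟩ := hU.1
  have hefix : ∀ u ∈ U, e u = u := by rw [hUe]; rintro _ ⟨z, rfl⟩; exact he.2 z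
  have hpe_range : range (fun z => p (e z)) = U :=
    hU.range_eq hatom (hp.comp he.1) (range_subset_iff.2 fun z => hpU (hUe ▸ mem_range_self z))
      ⟨a, b, hab, by rwa [hefix a ha, hefix b hb]⟩
  refine ⟨hp, ((toFinite U).surjOn_iff_bijOn_of_mapsTo hpU).1 fun u hu => ?_⟩
  obtain ⟨z, rfl⟩ := hpe_range ▸ hu
  exact ⟨e z, hUe ▸ mem_range_self z, rfl⟩

theorem IsMinimalSet.surjOn_class (hU : IsMinimalSet Alg δ U) (hatom : IsAtomCong Alg δ)
    {p : A → A} (hp : IsUnaryPolynomial Alg p) {c d : A} (hcd : δ c d)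
    (hpU : ∀ z, δ z c → p z ∈ U) (hne : p c ≠ p d) :
    SurjOn p {z | δ z c} {u ∈ U | δ u (p c)} := by
  have hδ := hatom.1
  obtain ⟨e, he, hUe, -⟩ := hU.1
  have hefix : ∀ u ∈ U, e u = u := by rw [hUe]; rintro _ ⟨z, rfl⟩; exact he.2 z
  have hpcd : δ (p c) (p d) := hδ.apply_unary hp hcd
  obtain ⟨s, hs, hsc, hsep⟩ := hatom.exists_separating hpcd hne hcd hne
  have hs_class : ∀ x, δ x (p c) → δ (s x) c := fun x hx =>
    hδ.1.trans (hδ.apply_unary hs hx) hsc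
  -- `B` agrees with `p ∘ s` on the class of `p c` and permutes the trace `N` there
  let B x := e (p (s x))
  have hB : ∀ x, δ x (p c) → B x = p (s x) := fun x hx => hefix _ (hpU _ (hs_class x hx))
  have hBU : MapsTo B U U := fun x _ => hUe ▸ mem_range_self _
  have hB_sep : B (p c) ≠ B (p d) := by rwa [hB _ (hδ.1.refl _), hB _ (hδ.1.symm hpcd)]
  have hB_perm := hU.mem_polPermFun hatom (he.1.comp (hp.comp hs)) hBU
    (hpU c (hδ.1.refl c)) (hpU d (hδ.1.symm hcd)) hpcd hB_sep
  let N := {u ∈ U | δ u (p c)}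
  have hBN : MapsTo B N N := fun x hx =>
    ⟨hBU hx.1, hB x hx.2 ▸ hδ.apply_unary hp (hs_class x hx.2)⟩
  have hBN_bij : BijOn B N N :=
    ((toFinite N).injOn_iff_bijOn_of_mapsTo hBN).1 (hB_perm.2.injOn.mono fun _ hx => hx.1)
  intro u hu
  obtain ⟨x, hx, rfl⟩ := hBN_bij.surjOn hu
  exact ⟨s x, hs_class x hx.2, (hB x hx.2).symm⟩

end MinimalSets

section StronglyAbelian

variable {σ : Signature} {A : Type} {Alg : UAlg σ A} {β γ : A → A → Prop}

theorem StronglyAbelianOver.polynomial (hSA : StronglyAbelianOver Alg β γ) (hβ : ∀ a, β a a)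
    {n m : ℕ} {g : (Fin (n + m) → A) → A} (hg : IsPolynomial Alg g) {a₁ a₂ : Fin n → A}
    {b₁ b₂ b₃ : Fin m → A} (ha : ∀ i, β (a₁ i) (a₂ i)) (hb₁₂ : ∀ i, β (b₁ i) (b₂ i))
    (hb₂₃ : ∀ i, β (b₂ i) (b₃ i)) (h : γ (g (Fin.append a₁ b₁)) (g (Fin.append a₂ b₂))) :
    γ (g (Fin.append a₁ b₃)) (g (Fin.append a₂ b₃)) := by
  obtain ⟨q, t, p, ht⟩ := hg
  -- the parameters of `g` join the second block of variables
  have hassoc : ∀ a b, g (Fin.append a b) =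
      (t.rename (Fin.cast (Nat.add_assoc n m q))).eval Alg (Fin.append a (Fin.append b p)) :=
    fun a b => by rw [ht, Term.eval_rename, Fin.append_assoc]
  have hparams : ∀ {b b' : Fin m → A}, (∀ i, β (b i) (b' i)) →
      ∀ i, β (Fin.append b p i) (Fin.append b' p i) := fun hb i =>
    Fin.addCases (fun i => by simpa using hb i) (fun i => by simpa using hβ _) i
  simp only [hassoc] at h ⊢
  exact hSA n (m + q) _ a₁ a₂ _ _ _ ha (hparams hb₁₂) (hparams hb₂₃) h

theorem StronglyAbelianOver.update_eq_update (hSA : StronglyAbelianOver Alg β γ)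
    (hβ : ∀ a, β a a) {k : ℕ} {f : (Fin k → A) → A} (hf : IsPolynomial Alg f) (i : Fin k)
    {a b : A} (hab : β a b) {u v w : Fin k → A} (huv : ∀ l, β (u l) (v l))
    (hvw : ∀ l, β (v l) (w l)) (h : γ (f (update u i a)) (f (update v i b))) :
    γ (f (update w i a)) (f (update w i b)) := by
  let g (x : Fin (1 + k) → A) : A :=
    f (update (fun l => x (Fin.natAdd 1 l)) i (x (Fin.castAdd k 0)))
  have hg : IsPolynomial Alg g := by
    refine hf.comp fun l => ?_
    rcases eq_or_ne l i with rfl | hl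
    · simpa using IsPolynomial.proj _
    · simpa [update_of_ne hl] using IsPolynomial.proj _
  have hg_append : ∀ c (x : Fin k → A), g (Fin.append (fun _ => c) x) = f (update x i c) := by
    simp [g]
  simpa only [hg_append] using hSA.polynomial hβ hg (a₁ := fun _ => a) (a₂ := fun _ => b)
    (fun _ => hab) huv hvw (by simpa only [hg_append] using h)

end StronglyAbelian

section Essential

variable {σ : Signature} {A : Type} {Alg : UAlg σ A} {δ : A → A → Prop} {k : ℕ}

/-- `f` is not constant in its `j`-th variable on the box `∏ l, [r l]_δ`. -/
def IsEssentialCoord (δ : A → A → Prop) (r : Fin k → A) (f : (Fin k → A) → A) (j : Fin k) :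
    Prop :=
  ∃ w c d, (∀ l, δ (w l) (r l)) ∧ δ c (r j) ∧ δ d (r j) ∧ f (update w j c) ≠ f (update w j d)

theorem update_eq_update_of_isEssentialCoord [Finite A] (hatom : IsAtomCong Alg δ)
    (hSA : StronglyAbelianOver Alg δ (fun a b => a = b)) {U : Set A} (hU : IsMinimalSet Alg δ U)
    {r : Fin k → A} {f : (Fin k → A) → A} (hf : IsPolynomial Alg f)
    (hfU : ∀ x : Fin k → A, (∀ l, δ (x l) (r l)) → f x ∈ U) {i j : Fin k}
    (hj : IsEssentialCoord δ r f j) (hij : i ≠ j) {w : Fin k → A} (hw : ∀ l, δ (w l) (r l))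
    {a b : A} (ha : δ a (r i)) (hb : δ b (r i)) : f (update w i a) = f (update w i b) := by
  obtain ⟨w₁, c, d, hw₁, hc, hd, hcd⟩ := hj
  have hδ := hatom.1.1
  have hbox : ∀ {x : Fin k → A}, (∀ l, δ (x l) (r l)) → ∀ l z, δ z (r l) →
      ∀ m, δ (update x l z m) (r m) := fun hx l _ hz =>
    (forall_update_iff _ fun m v => δ v (r m)).2 ⟨hz, fun m _ => hx m⟩
  have hbox_rel : ∀ {x y : Fin k → A}, (∀ l, δ (x l) (r l)) → (∀ l, δ (y l) (r l)) →
      ∀ l, δ (x l) (y l) := fun hx hy l => hδ.trans (hx l) (hδ.symm (hy l))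
  have hr : ∀ l, δ (r l) (r l) := fun l => hδ.refl _
  let ra := update r i a
  have hra : ∀ l, δ (ra l) (r l) := hbox hr i a ha
  have hsep : f (update ra j c) ≠ f (update ra j d) := fun h =>
    hcd (hSA.update_eq_update hδ.refl hf j (hδ.trans hc (hδ.symm hd)) (fun l => hδ.refl _)
      (hbox_rel hra hw₁) h)
  have hsurj := hU.surjOn_class hatom (hf.update ra j) (hδ.trans hc (hδ.symm hd))
    (fun z hz => hfU _ (hbox hra j z (hδ.trans hz hc))) hsep
  -- a change of the `i`-th variable from `b` to `a` is compensated in the `j`-th one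
  obtain ⟨z, hz, hfz⟩ := hsurj (a := f (update (update r i b) j c))
    ⟨hfU _ (hbox (hbox hr i b hb) j c hc), hatom.1.apply_polynomial hf
      (rel_update_update (rel_update_update hr i (hδ.trans hb (hδ.symm ha))) j (hδ.refl c))⟩
  refine hSA.update_eq_update hδ.refl hf i (hδ.trans ha (hδ.symm hb))
    (rel_update_update hr j hz) (hbox_rel (hbox hr j c hc) hw) ?_
  rwa [← update_comm hij, ← update_comm hij]

end Essential

/-- For a strongly abelian (type-1) atom δ with (⊥, δ)-minimal set U, any
polynomial mapping a product of δ-classes D₁ × ⋯ × D_k into U depends on at most one of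
its variables. -/
theorem stmt_19 {σ : Signature} {A : Type} [Fintype A] (Alg : UAlg σ A)
    (δ : A → A → Prop) (hatom : IsAtomCong Alg δ)
    (hSA : StronglyAbelianOver Alg δ (fun a b => a = b))
    (U : Set A) (hU : IsMinimalSet Alg δ U)
    (k : ℕ) (r : Fin k → A) (D : Fin k → Set A) (hD : ∀ i, D i = {x | δ x (r i)})
    (f : (Fin k → A) → A) (hf : IsPolynomial Alg f)
    (hfU : ∀ x : Fin k → A, (∀ i, x i ∈ D i) → f x ∈ U) :
    (∀ x y : Fin k → A, (∀ i, x i ∈ D i) → (∀ i, y i ∈ D i) → f x = f y) ∨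
    ∃ j : Fin k, ∀ x y : Fin k → A, (∀ i, x i ∈ D i) → (∀ i, y i ∈ D i) →
      x j = y j → f x = f y := by
  classical
  obtain rfl : D = fun i => {x | δ x (r i)} := funext hD
  by_cases hess : ∃ j, IsEssentialCoord δ r f j
  · obtain ⟨j, hj⟩ := hess
    refine Or.inr ⟨j, fun x y hx hy hxy => rel_of_forall_update (fun _ => rfl) Eq.trans hx hy
      fun l w hw => ?_⟩
    rcases eq_or_ne l j with rfl | hlj
    · rw [hxy]
    · exact update_eq_update_of_isEssentialCoord hatom hSA hU hf hfU hj hlj hw (hx l) (hy l)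
  · refine Or.inl fun x y hx hy => rel_of_forall_update (fun _ => rfl) Eq.trans hx hy
      fun l w hw => ?_
    by_contra hne
    exact hess ⟨l, w, x l, y l, hw, hx l, hy l, hne⟩
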